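/- arXiv:0903.5146 — 4 statements merged into one kernel-verified Lean document; each statement's English description precedes it below -/
import Mathlib

section
/- The directional derivative of p_{k+1} at x in direction y equals tr(B_k(x)·y); that is, (d/dt)|_{t=0} p_{k+1}(x + t y) = tr(B_k(x) y) for all n×n matrices x, y. -/
/-!
The proof is Jacobi's formula applied to the characteristic matrix. For the pencil
`A + t B` one has `d/dt det (A + t B) |_{t=0} = tr (adj A · B)`; applied to `A = sI - x`,
`B = -y` over `ℂ[s]` and read coefficientwise in `s`, it shows that the derivative of
`p_{k+1}` is the coefficient of `s^{n-1-k}` in `tr (adj (sI - x) · y)`. The classical expansion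
`adj (sI - x) = ∑_{k<n} s^{n-1-k} B_k(x)` identifies that coefficient with `tr (B_k(x) y)`.
-/

open Matrix BigOperators

/-- The signed coefficients of the characteristic polynomial:
`det (t•I - x) = t^n - p 1 x * t^(n-1) - ⋯ - p n x`. -/
noncomputable def charCoeff (n : ℕ) (k : ℕ) (x : Matrix (Fin n) (Fin n) ℂ) : ℂ :=
  -(x.charpoly.coeff (n - k))

/-- `B n k x = x^k - p 1 x • x^(k-1) - ⋯ - p k x • I`. -/
noncomputable def gradB (n : ℕ) (k : ℕ) (x : Matrix (Fin n) (Fin n) ℂ) :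
    Matrix (Fin n) (Fin n) ℂ :=
  x ^ k - ∑ i ∈ Finset.Icc 1 k, charCoeff n i x • x ^ (k - i)

open Polynomial

namespace Polynomial

theorem coeff_one_eq_eval_derivative {R : Type*} [CommRing R] (p : R[X]) :
    p.coeff 1 = (derivative p).eval 0 := by
  simp [← coeff_zero_eq_eval_zero, coeff_derivative]

theorem coeff_one_prod_C_add_X_mul_C {R ι : Type*} [CommRing R] [DecidableEq ι] (s : Finset ι)
    (a b : ι → R) :
    (∏ i ∈ s, (C (a i) + X * C (b i))).coeff 1 = ∑ i ∈ s, b i * ∏ j ∈ s.erase i, a j := by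
  rw [coeff_one_eq_eval_derivative, derivative_prod_finset, eval_finsetSum]
  refine Finset.sum_congr rfl fun i _ => ?_
  rw [eval_mul, eval_prod, mul_comm]
  simp

theorem hasDerivAt_coeff_eval_C {𝕜 : Type*} [NontriviallyNormedField 𝕜] (D : 𝕜[X][X]) (j : ℕ) :
    HasDerivAt (fun t : 𝕜 => (D.eval (C t)).coeff j) ((D.coeff 1).coeff j) 0 := by
  set q : 𝕜[X] := ∑ m ∈ D.support, C ((D.coeff m).coeff j) * X ^ m
  have hq : (fun t : 𝕜 => (D.eval (C t)).coeff j) = fun t => q.eval t := by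
    ext t
    rw [eval_eq_sum, sum_def, finsetSum_coeff, eval_finsetSum]
    simp only [← C_pow, coeff_mul_C, eval_mul, eval_C, eval_pow, eval_X]
  have hq1 : q.coeff 1 = (D.coeff 1).coeff j := by
    simp only [q, finsetSum_coeff, coeff_C_mul_X_pow, Finset.sum_ite_eq]
    split_ifs with h
    · rfl
    · rw [notMem_support_iff.mp h, coeff_zero]
  rw [hq, ← hq1, coeff_one_eq_eval_derivative]
  exact q.hasDerivAt 0

end Polynomial

namespace Matrix

variable {m R : Type*} [Fintype m] [DecidableEq m] [CommRing R]

theorem prod_updateCol_perm (A : Matrix m m R) (σ : Equiv.Perm m) (i : m) (c : m → R) :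
    ∏ j, A.updateCol i c (σ j) j = c (σ i) * ∏ j ∈ Finset.univ.erase i, A (σ j) j := by
  rw [← Finset.mul_prod_erase _ _ (Finset.mem_univ i), updateCol_self]
  congr 1
  refine Finset.prod_congr rfl fun j hj => ?_
  rw [updateCol_ne (Finset.ne_of_mem_erase hj)]

theorem coeff_det_add_X_smul_one (A B : Matrix m m R) :
    (det (A.map C + (X : R[X]) • B.map C)).coeff 1 = trace (adjugate A * B) := by
  calc (det (A.map C + (X : R[X]) • B.map C)).coeff 1
      = ∑ i, det (A.updateCol i fun k => B k i) := by
        simp only [det_apply, finsetSum_coeff, add_apply, map_apply, smul_apply, smul_eq_mul,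
          coeff_smul, coeff_one_prod_C_add_X_mul_C, Finset.smul_sum, prod_updateCol_perm]
        exact Finset.sum_comm
    _ = ∑ i, ∑ k, adjugate A i k * B k i := by
        simp [← cramer_apply, cramer_eq_adjugate_mulVec, mulVec, dotProduct]
    _ = trace (adjugate A * B) := by simp [trace, mul_apply]

theorem charpoly_add_smul_eq_eval (x y : Matrix m m R) (t : R) :
    (x + t • y).charpoly
      = (det ((charmatrix x).map C + (X : R[X][X]) • (-y.map C).map C)).eval (C t) := by
  rw [← coe_evalRingHom, RingHom.map_det, charpoly]
  congr 1
  ext i j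
  simp [charmatrix_apply]
  ring

theorem hasDerivAt_coeff_charpoly_add_smul {𝕜 : Type*} [NontriviallyNormedField 𝕜]
    (x y : Matrix m m 𝕜) (j : ℕ) :
    HasDerivAt (fun t : 𝕜 => (x + t • y).charpoly.coeff j)
      (-(trace (adjugate (charmatrix x) * y.map C)).coeff j) 0 := by
  simp only [charpoly_add_smul_eq_eval]
  convert hasDerivAt_coeff_eval_C _ j using 1
  rw [coeff_det_add_X_smul_one, Matrix.mul_neg, trace_neg, coeff_neg]

end Matrix

section

variable {n : ℕ} (x : Matrix (Fin n) (Fin n) ℂ)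

theorem gradB_eq_sum_range (k : ℕ) :
    gradB n k x = x ^ k - ∑ i ∈ Finset.range k, charCoeff n (i + 1) x • x ^ (k - 1 - i) := by
  rw [gradB, ← Finset.Ico_add_one_right_eq_Icc, Finset.sum_Ico_eq_sum_range]
  congr 1
  refine Finset.sum_congr (by simp) fun i hi => ?_
  rw [Finset.mem_range] at hi
  rw [add_comm 1 i, show k - (i + 1) = k - 1 - i by omega]

theorem gradB_zero : gradB n 0 x = 1 := by
  simp [gradB]

theorem mul_gradB (k : ℕ) :
    x * gradB n k x = gradB n (k + 1) x + charCoeff n (k + 1) x • 1 := by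
  have hterm : ∀ i ∈ Finset.range k, x * (charCoeff n (i + 1) x • x ^ (k - 1 - i))
      = charCoeff n (i + 1) x • x ^ (k + 1 - 1 - i) := by
    intro i hi
    rw [Finset.mem_range] at hi
    rw [mul_smul_comm, ← pow_succ', show k - 1 - i + 1 = k + 1 - 1 - i by omega]
  rw [gradB_eq_sum_range, gradB_eq_sum_range, mul_sub, Finset.mul_sum, Finset.sum_congr rfl hterm,
    Finset.sum_range_succ, ← pow_succ', Nat.add_sub_cancel, Nat.sub_self, pow_zero]
  abel

theorem charpoly_eq_X_pow_sub_sum :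
    x.charpoly = X ^ n - ∑ k ∈ Finset.range n, C (charCoeff n (k + 1) x) * X ^ (n - 1 - k) := by
  conv_lhs => rw [x.charpoly_monic.as_sum, charpoly_natDegree_eq_dim, Fintype.card_fin]
  rw [← Finset.sum_range_reflect, sub_eq_add_neg, ← Finset.sum_neg_distrib]
  congr 1
  refine Finset.sum_congr rfl fun k hk => ?_
  rw [Finset.mem_range] at hk
  rw [charCoeff, show n - (k + 1) = n - 1 - k by omega, map_neg, neg_mul, neg_neg]

theorem gradB_self : gradB n n x = 0 := by
  rw [← x.aeval_self_charpoly, charpoly_eq_X_pow_sub_sum, gradB_eq_sum_range]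
  simp [Algebra.smul_def]

theorem charmatrix_mul_smul_map_gradB {k : ℕ} (hk : k < n) :
    charmatrix x * ((X : ℂ[X]) ^ (n - 1 - k) • (gradB n k x).map C)
      = (X : ℂ[X]) ^ (n - k) • (gradB n k x).map C
        - (X : ℂ[X]) ^ (n - (k + 1)) • (gradB n (k + 1) x).map C
        - (C (charCoeff n (k + 1) x) * X ^ (n - 1 - k)) • 1 := by
  have hmap : x.map C * (gradB n k x).map C
      = (gradB n (k + 1) x).map C + C (charCoeff n (k + 1) x) • 1 := by
    rw [← Matrix.map_mul, mul_gradB, Matrix.map_add _ (map_add C),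
      Matrix.map_smul' _ _ _ (map_mul C), Matrix.map_one _ (map_zero C) (map_one C)]
  rw [charmatrix, sub_mul, scalar_apply, RingHom.mapMatrix_apply, Matrix.mul_smul,
    Matrix.mul_smul, hmap, ← smul_eq_diagonal_mul, show n - k = n - 1 - k + 1 by omega,
    show n - (k + 1) = n - 1 - k by omega, pow_succ]
  module

theorem adjugate_charmatrix_eq_sum :
    adjugate (charmatrix x)
      = ∑ k ∈ Finset.range n, (X : ℂ[X]) ^ (n - 1 - k) • (gradB n k x).map C := by
  refine (isRegular_of_isLeftRegular_det x.charpoly_monic.isRegular.left).left ?_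
  dsimp only
  rw [mul_adjugate, ← charpoly, Finset.mul_sum,
    Finset.sum_congr rfl fun k hk => charmatrix_mul_smul_map_gradB x (Finset.mem_range.mp hk),
    Finset.sum_sub_distrib, Finset.sum_range_sub' (fun k => (X : ℂ[X]) ^ (n - k) • _),
    gradB_zero, gradB_self, ← Finset.sum_smul]
  simp only [Nat.sub_zero, Nat.sub_self, Matrix.map_zero _ (map_zero C),
    Matrix.map_one _ (map_zero C) (map_one C), smul_zero, sub_zero, ← sub_smul]
  rw [← charpoly_eq_X_pow_sub_sum]

theorem coeff_trace_adjugate_charmatrix_mul {k : ℕ} (hk : k < n) (y : Matrix (Fin n) (Fin n) ℂ) :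
    (trace (adjugate (charmatrix x) * y.map C)).coeff (n - 1 - k) = trace (gradB n k x * y) := by
  have hterm : ∀ j, trace (((X : ℂ[X]) ^ (n - 1 - j) • (gradB n j x).map C) * y.map C)
      = C (trace (gradB n j x * y)) * X ^ (n - 1 - j) := by
    intro j
    rw [smul_mul, ← Matrix.map_mul, trace_smul, ← AddMonoidHom.map_trace, smul_eq_mul, mul_comm]
  rw [adjugate_charmatrix_eq_sum, Finset.sum_mul, trace_sum]
  simp only [hterm, finsetSum_coeff, coeff_C_mul_X_pow]
  rw [Finset.sum_eq_single_of_mem k (Finset.mem_range.mpr hk)]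
  · rw [if_pos rfl]
  · intro j hj hjk
    rw [if_neg (by rw [Finset.mem_range] at hj; omega)]

end

/--  is the gradient of  with respect to the trace form:
. -/
theorem stmt2 (n : ℕ) (k : ℕ) (hk : k ≤ n - 1) (x y : Matrix (Fin n) (Fin n) ℂ) :
    deriv (fun t : ℂ => charCoeff n (k + 1) (x + t • y)) 0 = (gradB n k x * y).trace := by
  have hderiv : HasDerivAt (fun t : ℂ => charCoeff n (k + 1) (x + t • y))
      (- -(trace (adjugate (charmatrix x) * y.map C)).coeff (n - (k + 1))) 0 :=
    (hasDerivAt_coeff_charpoly_add_smul x y _).fun_neg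
  rw [hderiv.deriv, neg_neg]
  rcases Nat.eq_zero_or_pos n with rfl | hn
  · simp
  · rw [show n - (k + 1) = n - 1 - k by omega, coeff_trace_adjugate_charmatrix_mul x (by omega)]
end

section
/- For any n×n matrix y, any column vector ξ ∈ M_{n,1}(ℂ), any row vector v* ∈ M_{1,n}(ℂ), and 0 ≤ k ≤ n-1, one has B_k(y + ξ v*)·ξ = B_k(y)·ξ. -/
open Matrix BigOperators

/-!
Writing `Q(t) = adj (t I - x) = ∑ Qₘ tᵐ`, the identity `(t I - x) Q(t) = χₓ(t) I` gives
`Qₘ = x Qₘ₊₁ + cₘ₊₁ I` with `cₘ` the coefficients of `χₓ`; hence `Q` has degree `< n` and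
`B_k(x) = Q_{n-1-k}`. Now `t I - (y + ξ v*)` is a rank-one update of `t I - y` along `ξ`, and
Cramer's rule shows `adj (A + ξ w*) ξ = adj A ξ`. So `adj (t I - x) ξ`, and with it every
`B_k(x) ξ`, is the same for `x = y` and `x = y + ξ v*`.
-/

open Polynomial

namespace Matrix

variable {R : Type*} [CommRing R] {m : Type*} [DecidableEq m] [Fintype m]

lemma updateCol_add_replicateCol_mul_replicateRow {ι : Type*} [Unique ι]
    (A : Matrix m m R) (u v : m → R) (i : m) :
    (A + replicateCol ι u * replicateRow ι v).updateCol i u =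
      A.updateCol i u *
        (1 + replicateCol ι (Pi.single i (1 : R)) * replicateRow ι (Function.update v i 0)) := by
  ext a b
  rw [Matrix.mul_add, Matrix.mul_one]
  by_cases hb : b = i
  · subst hb
    simp [updateCol_apply, mul_apply, Pi.single_apply]
  · simp [updateCol_apply, mul_apply, Pi.single_apply, hb, mul_comm]

/-- By Cramer's rule the entries are determinants with a column replaced by `u`, and once a column
is `u` the rank-one update along `u` is a unimodular column operation. -/
theorem adjugate_add_replicateCol_mul_replicateRow_mulVec {ι : Type*} [Unique ι]
    (A : Matrix m m R) (u v : m → R) :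
    adjugate (A + replicateCol ι u * replicateRow ι v) *ᵥ u = adjugate A *ᵥ u := by
  ext i
  rw [← cramer_eq_adjugate_mulVec, ← cramer_eq_adjugate_mulVec, cramer_apply, cramer_apply,
    updateCol_add_replicateCol_mul_replicateRow, det_mul, det_one_add_replicateCol_mul_replicateRow]
  simp [dotProduct_single]

lemma coeff_matPolyEquiv_adjugate_charmatrix (M : Matrix m m R) (k : ℕ) :
    (matPolyEquiv (adjugate (charmatrix M))).coeff k =
      M * (matPolyEquiv (adjugate (charmatrix M))).coeff (k + 1) +
        M.charpoly.coeff (k + 1) • 1 := by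
  have h := congrArg (fun p => p.coeff (k + 1))
    (congrArg matPolyEquiv (mul_adjugate (charmatrix M)))
  simp only [_root_.map_mul, matPolyEquiv_charmatrix, matPolyEquiv_smul_one, sub_mul, coeff_sub,
    coeff_X_mul, coeff_C_mul, coeff_map, Algebra.algebraMap_eq_smul_one] at h
  rw [sub_eq_iff_eq_add'] at h
  exact h

/-- `adjugate (charmatrix M)` has degree `< card m`: above that degree the recursion of
`coeff_matPolyEquiv_adjugate_charmatrix` has no inhomogeneous term, so it would force the leading
coefficient to vanish. -/
lemma coeff_matPolyEquiv_adjugate_charmatrix_eq_zero [Nontrivial R] (M : Matrix m m R) {k : ℕ}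
    (hk : Fintype.card m ≤ k) : (matPolyEquiv (adjugate (charmatrix M))).coeff k = 0 := by
  set P := matPolyEquiv (adjugate (charmatrix M))
  suffices hP : P.degree < Fintype.card m from
    coeff_eq_zero_of_degree_lt (hP.trans_le (by exact_mod_cast hk))
  by_contra! hle
  have hP0 : P ≠ 0 := by rintro h; simp [h] at hle
  have hdeg : Fintype.card m ≤ P.natDegree := by
    rwa [degree_eq_natDegree hP0, Nat.cast_le] at hle
  apply hP0
  rw [← leadingCoeff_eq_zero, leadingCoeff, coeff_matPolyEquiv_adjugate_charmatrix,
    coeff_eq_zero_of_natDegree_lt (Nat.lt_succ_self _),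
    coeff_eq_zero_of_natDegree_lt (p := M.charpoly) (by rw [charpoly_natDegree_eq_dim]; omega),
    mul_zero, zero_smul, add_zero]

end Matrix

lemma gradB_succ (n k : ℕ) (x : Matrix (Fin n) (Fin n) ℂ) :
    gradB n (k + 1) x = x * gradB n k x - charCoeff n (k + 1) x • 1 := by
  have hpow : ∀ i ∈ Finset.Icc 1 k, x * (charCoeff n i x • x ^ (k - i)) =
      charCoeff n i x • x ^ (k + 1 - i) := by
    intro i hi
    rw [mul_smul_comm, ← pow_succ', Nat.sub_add_comm (Finset.mem_Icc.mp hi).2]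
  rw [gradB, gradB, Finset.sum_Icc_succ_top (by omega), mul_sub, Finset.mul_sum,
    Finset.sum_congr rfl hpow, ← pow_succ', Nat.sub_self, pow_zero]
  abel

theorem gradB_eq_coeff_matPolyEquiv_adjugate_charmatrix {n k : ℕ} (hk : k < n)
    (x : Matrix (Fin n) (Fin n) ℂ) :
    gradB n k x = (matPolyEquiv (adjugate (charmatrix x))).coeff (n - 1 - k) := by
  induction k with
  | zero =>
    have hc : x.charpoly.coeff n = 1 := by
      simpa using (charpoly_monic x).coeff_natDegree
    rw [Nat.sub_zero, coeff_matPolyEquiv_adjugate_charmatrix, Nat.sub_add_cancel hk,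
      coeff_matPolyEquiv_adjugate_charmatrix_eq_zero x (by simp), hc]
    simp [gradB]
  | succ k ih =>
    rw [gradB_succ, ih (by omega), coeff_matPolyEquiv_adjugate_charmatrix (k := n - 1 - (k + 1)),
      show n - 1 - (k + 1) + 1 = n - (k + 1) by omega,
      show n - 1 - k = n - (k + 1) by omega, charCoeff, neg_smul, sub_neg_eq_add]

lemma gradB_mul_apply_eq_coeff {n k : ℕ} (hk : k < n) {ι : Type*} (x : Matrix (Fin n) (Fin n) ℂ)
    (w : Matrix (Fin n) ι ℂ) (a : Fin n) (j : ι) :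
    (gradB n k x * w) a j =
      ((adjugate (charmatrix x) *ᵥ fun l => C (w l j)) a).coeff (n - 1 - k) := by
  simp only [gradB_eq_coeff_matPolyEquiv_adjugate_charmatrix hk, mul_apply, mulVec, dotProduct,
    finsetSum_coeff, coeff_mul_C, matPolyEquiv_coeff_apply]

/--  for a rank-one perturbation. -/
theorem stmt4 (n : ℕ) (k : ℕ) (hk : k ≤ n - 1) (y : Matrix (Fin n) (Fin n) ℂ)
    (xi : Matrix (Fin n) (Fin 1) ℂ) (vstar : Matrix (Fin 1) (Fin n) ℂ) :
    gradB n k (y + xi * vstar) * xi = gradB n k y * xi := by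
  rcases Nat.eq_zero_or_pos n with rfl | hn
  · exact Subsingleton.elim _ _
  have hcharmatrix : charmatrix (y + xi * vstar) = charmatrix y +
      replicateCol (Fin 1) (fun l => C (xi l 0)) * replicateRow (Fin 1) (fun l => -C (vstar 0 l)) := by
    ext a b : 1
    simp only [charmatrix_apply, Matrix.add_apply, mul_apply, replicateCol_apply, replicateRow_apply,
      Fin.sum_univ_one, map_add, map_mul]
    ring
  ext a j
  rw [Subsingleton.elim j 0, gradB_mul_apply_eq_coeff (by omega),
    gradB_mul_apply_eq_coeff (by omega), hcharmatrix]
  exact congrArg (fun w : Fin n → ℂ[X] => (w a).coeff (n - 1 - k))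
    (adjugate_add_replicateCol_mul_replicateRow_mulVec _ _ _)
end

section
/- The map M : gl(n,ℂ) × ℂ^n × (ℂ^n)* → gl(n+1,ℂ) sending (x, u, v*) to the block matrix [[x, u],[v*, 0]] is an injective Lie algebra homomorphism from the semidirect product Lie algebra b = gl(n) ⋉ (V ⊕ V*) into the Z_2-contraction Lie algebra k = g_0 ⋉ g_1, whose image is an ideal of codimension 1 in k. -/
open Matrix BigOperators

/-- The underlying space of `b = gl(n) ⋉ (V ⊕ V*)`. -/
abbrev LieB (n : ℕ) :=
  Matrix (Fin n) (Fin n) ℂ × Matrix (Fin n) (Fin 1) ℂ × Matrix (Fin 1) (Fin n) ℂ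

/-- The bracket of the semidirect product `b = gl(n) ⋉ (V ⊕ V*)`. -/
noncomputable def bracketB (n : ℕ) (p q : LieB n) : LieB n :=
  (p.1 * q.1 - q.1 * p.1, p.1 * q.2.1 - q.1 * p.2.1, -(q.2.2 * p.1) + p.2.2 * q.1)

/-- Projection of a matrix of size `n+1` onto its block-diagonal part `g₀`. -/
def proj0 (n : ℕ) (Z : Matrix (Fin n ⊕ Fin 1) (Fin n ⊕ Fin 1) ℂ) :
    Matrix (Fin n ⊕ Fin 1) (Fin n ⊕ Fin 1) ℂ :=
  Matrix.of fun i j => if i.isLeft = j.isLeft then Z i j else 0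

/-- Projection onto the block-off-diagonal part `g₁`. -/
noncomputable def proj1 (n : ℕ) (Z : Matrix (Fin n ⊕ Fin 1) (Fin n ⊕ Fin 1) ℂ) :
    Matrix (Fin n ⊕ Fin 1) (Fin n ⊕ Fin 1) ℂ :=
  Z - proj0 n Z

/-- The bracket of the `ℤ₂`-contraction `k = g₀ ⋉ g₁` of `gl(n+1)`:
the `g₁`-`g₁` part of the usual bracket is set to zero. -/
noncomputable def bracketK (n : ℕ) (Z W : Matrix (Fin n ⊕ Fin 1) (Fin n ⊕ Fin 1) ℂ) :
    Matrix (Fin n ⊕ Fin 1) (Fin n ⊕ Fin 1) ℂ :=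
  (proj0 n Z * proj0 n W - proj0 n W * proj0 n Z)
    + (proj0 n Z * proj1 n W - proj1 n W * proj0 n Z)
    + (proj1 n Z * proj0 n W - proj0 n W * proj1 n Z)

/-- The linear map `M : b → k`, `(x, u, v*) ↦ [[x, u], [v*, 0]]`. -/
noncomputable def Mlin (n : ℕ) : LieB n →ₗ[ℂ] Matrix (Fin n ⊕ Fin 1) (Fin n ⊕ Fin 1) ℂ where
  toFun p := Matrix.fromBlocks p.1 p.2.1 p.2.2 0
  map_add' p q := by
    ext i j
    cases i <;> cases j <;>
      simp [Matrix.fromBlocks, Matrix.add_apply]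
  map_smul' c p := by
    ext i j
    cases i <;> cases j <;>
      simp [Matrix.fromBlocks, Matrix.smul_apply]

/-! The image of `M` is the hyperplane of matrices with zero bottom-right entry, the kernel of a
nonzero linear functional. The bottom-right entry of any bracket in `k` is the commutator of two
`1 × 1` matrices, hence zero, so the image contains `[k, k]` and is in particular an ideal. -/

section BlockFormulas

variable (n : ℕ) (a a' : Matrix (Fin n) (Fin n) ℂ) (b b' : Matrix (Fin n) (Fin 1) ℂ)
  (c c' : Matrix (Fin 1) (Fin n) ℂ) (d d' : Matrix (Fin 1) (Fin 1) ℂ)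

lemma proj0_fromBlocks : proj0 n (fromBlocks a b c d) = fromBlocks a 0 0 d := by
  ext (i | i) (j | j) <;> simp [proj0]

lemma proj1_fromBlocks : proj1 n (fromBlocks a b c d) = fromBlocks 0 b c 0 := by
  rw [proj1, proj0_fromBlocks, sub_eq_add_neg, fromBlocks_neg, fromBlocks_add]
  simp

lemma bracketK_fromBlocks :
    bracketK n (fromBlocks a b c d) (fromBlocks a' b' c' d') =
      fromBlocks (a * a' - a' * a) (a * b' - b' * d + (b * d' - a' * b))
        (d * c' - c' * a + (c * a' - d' * c)) (d * d' - d' * d) := by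
  simp only [bracketK, proj0_fromBlocks, proj1_fromBlocks, fromBlocks_multiply, sub_eq_add_neg,
    fromBlocks_neg, fromBlocks_add, Matrix.mul_zero, Matrix.zero_mul, add_zero, zero_add, neg_zero]

end BlockFormulas

lemma Mlin_apply (n : ℕ) (p : LieB n) : Mlin n p = fromBlocks p.1 p.2.1 p.2.2 0 := rfl

lemma Mlin_injective (n : ℕ) : Function.Injective (Mlin n) := by
  rintro ⟨x, u, v⟩ ⟨x', u', v'⟩ h
  obtain ⟨rfl, rfl, rfl, -⟩ := fromBlocks_inj.mp (by simpa only [Mlin_apply] using h)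
  rfl

lemma Mlin_bracketB (n : ℕ) (p q : LieB n) :
    Mlin n (bracketB n p q) = bracketK n (Mlin n p) (Mlin n q) := by
  simp [Mlin_apply, bracketK_fromBlocks, bracketB, sub_eq_add_neg]

lemma range_Mlin (n : ℕ) :
    LinearMap.range (Mlin n) = LinearMap.ker (entryLinearMap ℂ ℂ (Sum.inr 0) (Sum.inr 0)) := by
  ext Z
  rw [LinearMap.mem_ker, entryLinearMap_apply]
  constructor
  · rintro ⟨p, rfl⟩
    rfl
  · intro hZ
    refine ⟨(Z.toBlocks₁₁, Z.toBlocks₁₂, Z.toBlocks₂₁), ?_⟩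
    conv_rhs => rw [← Z.fromBlocks_toBlocks]
    rw [Mlin_apply]
    congr
    ext i j
    simpa [Fin.fin_one_eq_zero i, Fin.fin_one_eq_zero j, toBlocks₂₂] using hZ.symm

lemma bracketK_mem_range_Mlin (n : ℕ) (Z W : Matrix (Fin n ⊕ Fin 1) (Fin n ⊕ Fin 1) ℂ) :
    bracketK n Z W ∈ LinearMap.range (Mlin n) := by
  rw [range_Mlin, LinearMap.mem_ker, entryLinearMap_apply, ← Z.fromBlocks_toBlocks,
    ← W.fromBlocks_toBlocks, bracketK_fromBlocks, fromBlocks_apply₂₂]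
  simp [Matrix.mul_apply, mul_comm]

lemma rank_quotient_range_Mlin (n : ℕ) :
    Module.rank ℂ
      (Matrix (Fin n ⊕ Fin 1) (Fin n ⊕ Fin 1) ℂ ⧸ LinearMap.range (Mlin n)) = 1 := by
  have hsurj : Function.Surjective (entryLinearMap ℂ ℂ
      (Sum.inr 0 : Fin n ⊕ Fin 1) (Sum.inr 0 : Fin n ⊕ Fin 1)) :=
    fun t => ⟨Matrix.of fun _ _ => t, rfl⟩
  rw [range_Mlin, (LinearMap.quotKerEquivOfSurjective _ hsurj).rank_eq, Module.rank_self]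

/-- `M` is an injective Lie algebra homomorphism from the semidirect product
`b = gl(n) ⋉ (V ⊕ V*)` to the `ℤ₂`-contraction `k`, whose image is an ideal of
codimension 1 in `k`. -/
theorem stmt13 (n : ℕ) :
    Function.Injective (Mlin n) ∧
    (∀ p q : LieB n, Mlin n (bracketB n p q) = bracketK n (Mlin n p) (Mlin n q)) ∧
    (∀ Z : Matrix (Fin n ⊕ Fin 1) (Fin n ⊕ Fin 1) ℂ,
      ∀ W ∈ LinearMap.range (Mlin n),
        bracketK n Z W ∈ LinearMap.range (Mlin n) ∧
        bracketK n W Z ∈ LinearMap.range (Mlin n)) ∧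
    Module.rank ℂ
      (Matrix (Fin n ⊕ Fin 1) (Fin n ⊕ Fin 1) ℂ ⧸ LinearMap.range (Mlin n)) = 1 :=
  ⟨Mlin_injective n, Mlin_bracketB n,
    fun Z W _ => ⟨bracketK_mem_range_Mlin n Z W, bracketK_mem_range_Mlin n W Z⟩,
    rank_quotient_range_Mlin n⟩
end

section
/- For n = 2ℓ+1 odd, there is a polynomial covariant pf : so(n,ℂ) → ℂ^n (the 'vector pfaffian') such that for every antisymmetric y and every row vector w*, w*·pf(y) = Pf([[y, -ᵗw*],[w*, 0]]), the pfaffian of the (2ℓ+2)×(2ℓ+2) antisymmetric matrix; moreover pf(g y g^{-1}) = (det g)·g·pf(y) for all g ∈ O(n,ℂ). -/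
open Matrix BigOperators

/-- The Pfaffian of a `2m × 2m` matrix, defined by the standard formula
`Pf A = (1/(2^m m!)) ∑_σ sgn(σ) ∏ᵢ A_{σ(2i) σ(2i+1)}`. -/
noncomputable def pfaffian (m : ℕ) (A : Matrix (Fin (2 * m)) (Fin (2 * m)) ℂ) : ℂ :=
  (1 / ((2 : ℂ) ^ m * (Nat.factorial m : ℂ))) *
    ∑ σ : Equiv.Perm (Fin (2 * m)), (Equiv.Perm.sign σ : ℤ) *
      ∏ i : Fin m, A (σ ⟨2 * (i : ℕ), by have := i.2; omega⟩)
        (σ ⟨2 * (i : ℕ) + 1, by have := i.2; omega⟩)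

/-- The `(2ℓ+2) × (2ℓ+2)` antisymmetric matrix `[[y, -ᵗw*], [w*, 0]]`,
reindexed by `Fin (2(ℓ+1))`. -/
noncomputable def Yblock (l : ℕ) (y : Matrix (Fin (2 * l + 1)) (Fin (2 * l + 1)) ℂ)
    (wstar : Matrix (Fin 1) (Fin (2 * l + 1)) ℂ) :
    Matrix (Fin (2 * (l + 1))) (Fin (2 * (l + 1))) ℂ :=
  Matrix.reindex (finSumFinEquiv.trans (finCongr (by omega)))
    (finSumFinEquiv.trans (finCongr (by omega)))
    (Matrix.fromBlocks y (-(wstarᵀ)) wstar 0)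


/-!
The `i`-th coordinate of the vector pfaffian is the pfaffian of the bordered matrix with
`w* = eᵢ`. In each term `sgn σ ∏ᵢ A (σ (2i)) (σ (2i+1))` of the pfaffian sum of a bordered matrix
the border index lies in exactly one pair, so the term is linear in `w*`; this gives
`w* · pf y = Pf [[y, -ᵗw*], [w*, 0]]`. For orthogonal `g`, the bordered matrix of `(g y g⁻¹, w*)`
is the conjugate by `diag (g, 1)` of that of `(y, w* g)`, and `Pf (B A Bᵀ) = det B · Pf A` for
every `B`, by the same expansion as `det (M N) = det M · det N`. Polynomiality holds because the
pfaffian sum makes sense over any commutative ring and commutes with ring homomorphisms, so one may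
evaluate it at the generic matrix.
-/

open Finset Equiv

def evenIdx (m : ℕ) (i : Fin m) : Fin (2 * m) := ⟨2 * i, by omega⟩

def oddIdx (m : ℕ) (i : Fin m) : Fin (2 * m) := ⟨2 * i + 1, by omega⟩

def halfIdx (m : ℕ) (x : Fin (2 * m)) : Fin m := ⟨x / 2, by omega⟩

lemma halfIdx_evenIdx (m : ℕ) (i : Fin m) : halfIdx m (evenIdx m i) = i := by
  ext; simp [halfIdx, evenIdx]

lemma halfIdx_oddIdx (m : ℕ) (i : Fin m) : halfIdx m (oddIdx m i) = i := by
  ext; simp [halfIdx, oddIdx]; omega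

lemma evenIdx_halfIdx_or_oddIdx_halfIdx (m : ℕ) (x : Fin (2 * m)) :
    evenIdx m (halfIdx m x) = x ∨ oddIdx m (halfIdx m x) = x := by
  simp only [Fin.ext_iff, evenIdx, oddIdx, halfIdx]; omega

def pairIdxEquiv (m : ℕ) : Fin m × Fin 2 ≃ Fin (2 * m) :=
  finProdFinEquiv.trans (finCongr (mul_comm m 2))

@[simp] lemma pairIdxEquiv_zero (m : ℕ) (i : Fin m) : pairIdxEquiv m (i, 0) = evenIdx m i := by
  ext; simp [pairIdxEquiv, evenIdx]

@[simp] lemma pairIdxEquiv_one (m : ℕ) (i : Fin m) : pairIdxEquiv m (i, 1) = oddIdx m i := by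
  ext; simp [pairIdxEquiv, oddIdx]; omega

lemma prod_fin_two_mul_eq_prod_pairs {M : Type*} [CommMonoid M] (m : ℕ) (h : Fin (2 * m) → M) :
    ∏ x, h x = ∏ i, h (evenIdx m i) * h (oddIdx m i) := by
  rw [← (pairIdxEquiv m).prod_comp, Fintype.prod_prod_type]
  simp [Fin.prod_univ_two]

def pairFunEquiv (m : ℕ) (α : Type*) : (Fin (2 * m) → α) ≃ (Fin m → α × α) :=
  ((pairIdxEquiv m).symm.arrowCongr (Equiv.refl α)).trans
    ((Equiv.curry _ _ _).trans (Equiv.piCongrRight fun _ => piFinTwoEquiv fun _ => α))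

@[simp] lemma pairFunEquiv_apply (m : ℕ) {α : Type*} (f : Fin (2 * m) → α) (i : Fin m) :
    pairFunEquiv m α f i = (f (evenIdx m i), f (oddIdx m i)) := by
  simp [pairFunEquiv]

lemma sum_fun_eq_sum_perm {α M : Type*} [Fintype α] [DecidableEq α] [AddCommMonoid M]
    (h : (α → α) → M) (hh : ∀ f, ¬ Function.Injective f → h f = 0) :
    ∑ f, h f = ∑ π : Perm α, h π := by
  rw [← sum_image (s := univ) (g := fun π : Perm α => ⇑π)
    fun _ _ _ _ hπ => Equiv.coe_fn_injective hπ]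
  refine (sum_subset (subset_univ _) fun f _ hf => hh f fun hinj => hf ?_).symm
  exact mem_image.2 ⟨Equiv.ofBijective f (Finite.injective_iff_bijective.1 hinj), mem_univ _, rfl⟩

section PfaffianSum

variable {R S : Type*} [CommRing R] [CommRing S]

def pfaffianSum (m : ℕ) (A : Matrix (Fin (2 * m)) (Fin (2 * m)) R) : R :=
  ∑ σ : Perm (Fin (2 * m)), (Perm.sign σ : ℤ) * ∏ i, A (σ (evenIdx m i)) (σ (oddIdx m i))

lemma pfaffian_eq_mul_pfaffianSum (m : ℕ) (A : Matrix (Fin (2 * m)) (Fin (2 * m)) ℂ) :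
    pfaffian m A = 1 / (2 ^ m * (m.factorial : ℂ)) * pfaffianSum m A :=
  rfl

lemma RingHom.map_pfaffianSum (f : R →+* S) (m : ℕ) (A : Matrix (Fin (2 * m)) (Fin (2 * m)) R) :
    f (pfaffianSum m A) = pfaffianSum m (A.map f) := by
  simp [pfaffianSum, map_sum, map_prod]

lemma prod_pairs_mul_mul_transpose (m : ℕ) (A B : Matrix (Fin (2 * m)) (Fin (2 * m)) R)
    (σ : Perm (Fin (2 * m))) :
    ∏ i, (B * A * Bᵀ) (σ (evenIdx m i)) (σ (oddIdx m i)) =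
      ∑ f : Fin (2 * m) → Fin (2 * m),
        (∏ i, A (f (evenIdx m i)) (f (oddIdx m i))) * ∏ x, B (σ x) (f x) := by
  have entry : ∀ a b, (B * A * Bᵀ) a b =
      ∑ z : Fin (2 * m) × Fin (2 * m), B a z.1 * A z.1 z.2 * B b z.2 := by
    intro a b
    simp only [Matrix.mul_apply, Matrix.transpose_apply, sum_mul, Fintype.sum_prod_type]
    exact sum_comm
  simp only [entry]
  rw [prod_univ_sum, Fintype.piFinset_univ, ← (pairFunEquiv m _).sum_comp]
  refine sum_congr rfl fun f _ => ?_
  rw [prod_fin_two_mul_eq_prod_pairs m (fun x => B (σ x) (f x)), ← prod_mul_distrib]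
  refine prod_congr rfl fun i _ => ?_
  simp only [pairFunEquiv_apply]
  ring

lemma pfaffianSum_mul_mul_transpose (m : ℕ) (A B : Matrix (Fin (2 * m)) (Fin (2 * m)) R) :
    pfaffianSum m (B * A * Bᵀ) = B.det * pfaffianSum m A := by
  have hdet : ∀ f : Fin (2 * m) → Fin (2 * m),
      ∑ σ : Perm (Fin (2 * m)), (Perm.sign σ : ℤ) * ∏ x, B (σ x) (f x) =
        (B.submatrix id f).det := by
    intro f
    rw [Matrix.det_apply']
    rfl
  calc pfaffianSum m (B * A * Bᵀ)
      = ∑ f : Fin (2 * m) → Fin (2 * m),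
          (∏ i, A (f (evenIdx m i)) (f (oddIdx m i))) * (B.submatrix id f).det := by
        simp only [pfaffianSum, prod_pairs_mul_mul_transpose, mul_sum, ← hdet]
        rw [sum_comm]
        refine sum_congr rfl fun f _ => sum_congr rfl fun σ _ => by ring
    _ = ∑ π : Perm (Fin (2 * m)),
          (∏ i, A (π (evenIdx m i)) (π (oddIdx m i))) * (B.submatrix id π).det := by
        refine sum_fun_eq_sum_perm _ fun f hf => ?_
        obtain ⟨a, b, hab, hne⟩ := Function.not_injective_iff.1 hf
        rw [Matrix.det_zero_of_column_eq hne fun k => by simp [hab], mul_zero]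
    _ = B.det * pfaffianSum m A := by
        simp only [pfaffianSum, mul_sum, Matrix.det_permute']
        refine sum_congr rfl fun π _ => by ring

end PfaffianSum

lemma prod_eq_sum_mul_of_linear_factor {ι κ W R : Type*} [Fintype ι] [DecidableEq ι] [Fintype κ]
    [CommSemiring R] (E : W → ι → R) (c : W → κ → R) (v : κ → W) (j : ι)
    (hj : ∀ w, E w j = ∑ k, c w k * E (v k) j) (hi : ∀ i ≠ j, ∀ w w', E w i = E w' i) (w : W) :
    ∏ i, E w i = ∑ k, c w k * ∏ i, E (v k) i := by
  have hrest : ∀ w', ∏ i ∈ univ.erase j, E w' i = ∏ i ∈ univ.erase j, E w i := fun w' =>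
    prod_congr rfl fun i hi' => hi i (ne_of_mem_erase hi') w' w
  simp only [← mul_prod_erase univ _ (mem_univ j), hrest, hj w, sum_mul, mul_assoc]

section Bordered

variable {R S : Type*} [CommRing R] [CommRing S] (l : ℕ)

def borderEquiv : Fin (2 * l + 1) ⊕ Fin 1 ≃ Fin (2 * (l + 1)) :=
  finSumFinEquiv.trans (finCongr (by omega))

def borderIdx : Fin (2 * (l + 1)) := borderEquiv l (Sum.inr 0)

def borderedMatrix (y : Matrix (Fin (2 * l + 1)) (Fin (2 * l + 1)) R)
    (w : Matrix (Fin 1) (Fin (2 * l + 1)) R) : Matrix (Fin (2 * (l + 1))) (Fin (2 * (l + 1))) R :=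
  Matrix.reindex (borderEquiv l) (borderEquiv l) (Matrix.fromBlocks y (-wᵀ) w 0)

lemma Yblock_eq_borderedMatrix (y : Matrix (Fin (2 * l + 1)) (Fin (2 * l + 1)) ℂ)
    (w : Matrix (Fin 1) (Fin (2 * l + 1)) ℂ) : Yblock l y w = borderedMatrix l y w :=
  rfl

variable {l}

lemma borderedMatrix_map (f : R →+* S) (y : Matrix (Fin (2 * l + 1)) (Fin (2 * l + 1)) R)
    (w : Matrix (Fin 1) (Fin (2 * l + 1)) R) :
    (borderedMatrix l y w).map f = borderedMatrix l (y.map f) (w.map f) := by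
  rw [borderedMatrix, borderedMatrix, Matrix.reindex_apply, Matrix.reindex_apply,
    ← Matrix.submatrix_map, Matrix.fromBlocks_map]
  congr 2 <;> ext <;> simp

lemma borderedMatrix_apply_of_ne (y : Matrix (Fin (2 * l + 1)) (Fin (2 * l + 1)) R)
    (w w' : Matrix (Fin 1) (Fin (2 * l + 1)) R) {a b : Fin (2 * (l + 1))}
    (ha : a ≠ borderIdx l) (hb : b ≠ borderIdx l) :
    borderedMatrix l y w a b = borderedMatrix l y w' a b := by
  obtain ⟨a | a, rfl⟩ := (borderEquiv l).surjective a
  · obtain ⟨b | b, rfl⟩ := (borderEquiv l).surjective b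
    · simp [borderedMatrix]
    · exact absurd (by rw [Fin.fin_one_eq_zero b]; rfl) hb
  · exact absurd (by rw [Fin.fin_one_eq_zero a]; rfl) ha

lemma borderedMatrix_apply_eq_sum (y : Matrix (Fin (2 * l + 1)) (Fin (2 * l + 1)) R)
    (w : Matrix (Fin 1) (Fin (2 * l + 1)) R) {a b : Fin (2 * (l + 1))}
    (h : a = borderIdx l ∨ b = borderIdx l) :
    borderedMatrix l y w a b = ∑ k, w 0 k * borderedMatrix l y (Matrix.single 0 k 1) a b := by
  obtain ⟨a | a, rfl⟩ := (borderEquiv l).surjective a <;>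
    obtain ⟨b | b, rfl⟩ := (borderEquiv l).surjective b
  · simp [borderIdx] at h
  all_goals simp [borderedMatrix, Matrix.single_apply, Fin.fin_one_eq_zero]

lemma pfaffianSum_borderedMatrix (y : Matrix (Fin (2 * l + 1)) (Fin (2 * l + 1)) R)
    (w : Matrix (Fin 1) (Fin (2 * l + 1)) R) :
    pfaffianSum (l + 1) (borderedMatrix l y w) =
      ∑ k, w 0 k * pfaffianSum (l + 1) (borderedMatrix l y (Matrix.single 0 k 1)) := by
  simp only [pfaffianSum, mul_sum]
  rw [sum_comm]
  refine sum_congr rfl fun σ _ => ?_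
  -- the border index lies in the pair `{σ (2j), σ (2j+1)}` and in no other
  set j := halfIdx (l + 1) (σ.symm (borderIdx l)) with hj_def
  have hj : σ (evenIdx (l + 1) j) = borderIdx l ∨ σ (oddIdx (l + 1) j) = borderIdx l := by
    simp only [← Perm.eq_inv_iff_eq]
    exact evenIdx_halfIdx_or_oddIdx_halfIdx _ _
  have hi : ∀ i ≠ j, σ (evenIdx (l + 1) i) ≠ borderIdx l ∧ σ (oddIdx (l + 1) i) ≠ borderIdx l := by
    intro i hij
    constructor <;> intro h <;> apply hij
    · rw [hj_def, ← h, Equiv.symm_apply_apply, halfIdx_evenIdx]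
    · rw [hj_def, ← h, Equiv.symm_apply_apply, halfIdx_oddIdx]
  rw [prod_eq_sum_mul_of_linear_factor
    (fun w i => borderedMatrix l y w (σ (evenIdx (l + 1) i)) (σ (oddIdx (l + 1) i)))
    (fun w k => w 0 k) (fun k => Matrix.single 0 k 1) j
    (fun w => borderedMatrix_apply_eq_sum y w hj)
    (fun i hij w w' => borderedMatrix_apply_of_ne y w w' (hi i hij).1 (hi i hij).2), mul_sum]
  exact sum_congr rfl fun k _ => mul_left_comm _ _ _

variable (l) in
def borderExtend (g : Matrix (Fin (2 * l + 1)) (Fin (2 * l + 1)) R) :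
    Matrix (Fin (2 * (l + 1))) (Fin (2 * (l + 1))) R :=
  Matrix.reindex (borderEquiv l) (borderEquiv l) (Matrix.fromBlocks g 0 0 1)

lemma det_borderExtend (g : Matrix (Fin (2 * l + 1)) (Fin (2 * l + 1)) R) :
    (borderExtend l g).det = g.det := by
  rw [borderExtend, Matrix.det_reindex_self, Matrix.det_fromBlocks_zero₂₁, Matrix.det_one, mul_one]

lemma borderedMatrix_mul_mul_transpose {g : Matrix (Fin (2 * l + 1)) (Fin (2 * l + 1)) R}
    (hg : g * gᵀ = 1) (y : Matrix (Fin (2 * l + 1)) (Fin (2 * l + 1)) R)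
    (w : Matrix (Fin 1) (Fin (2 * l + 1)) R) :
    borderedMatrix l (g * y * gᵀ) w =
      borderExtend l g * borderedMatrix l y (w * g) * (borderExtend l g)ᵀ := by
  have hw : g * (gᵀ * wᵀ) = wᵀ := by rw [← Matrix.mul_assoc, hg, Matrix.one_mul]
  have hw' : w * (g * gᵀ) = w := by rw [hg, Matrix.mul_one]
  simp only [borderedMatrix, borderExtend, Matrix.reindex_apply, Matrix.transpose_submatrix,
    Matrix.submatrix_mul_equiv, Matrix.fromBlocks_transpose, Matrix.fromBlocks_multiply]
  simp [Matrix.mul_assoc, hw, hw']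

lemma pfaffianSum_borderedMatrix_mul_mul_transpose
    {g : Matrix (Fin (2 * l + 1)) (Fin (2 * l + 1)) R} (hg : g * gᵀ = 1)
    (y : Matrix (Fin (2 * l + 1)) (Fin (2 * l + 1)) R) (w : Matrix (Fin 1) (Fin (2 * l + 1)) R) :
    pfaffianSum (l + 1) (borderedMatrix l (g * y * gᵀ) w) =
      g.det * pfaffianSum (l + 1) (borderedMatrix l y (w * g)) := by
  rw [borderedMatrix_mul_mul_transpose hg, pfaffianSum_mul_mul_transpose, det_borderExtend]

end Bordered

section VectorPfaffian

variable {l : ℕ}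

variable (l) in
noncomputable def vectorPfaffian (y : Matrix (Fin (2 * l + 1)) (Fin (2 * l + 1)) ℂ) :
    Matrix (Fin (2 * l + 1)) (Fin 1) ℂ :=
  Matrix.of fun i _ => pfaffian (l + 1) (Yblock l y (Matrix.single 0 i 1))

lemma row_mul_vectorPfaffian (y : Matrix (Fin (2 * l + 1)) (Fin (2 * l + 1)) ℂ)
    (w : Matrix (Fin 1) (Fin (2 * l + 1)) ℂ) :
    (w * vectorPfaffian l y) 0 0 = pfaffian (l + 1) (Yblock l y w) := by
  simp only [Matrix.mul_apply, vectorPfaffian, Matrix.of_apply, Yblock_eq_borderedMatrix,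
    pfaffian_eq_mul_pfaffianSum]
  rw [pfaffianSum_borderedMatrix y w, mul_sum]
  exact sum_congr rfl fun k _ => mul_left_comm _ _ _

lemma vectorPfaffian_conj {g : Matrix (Fin (2 * l + 1)) (Fin (2 * l + 1)) ℂ} (hg : gᵀ * g = 1)
    (y : Matrix (Fin (2 * l + 1)) (Fin (2 * l + 1)) ℂ) :
    vectorPfaffian l (g * y * g⁻¹) = g.det • (g * vectorPfaffian l y) := by
  ext i j
  rw [Fin.fin_one_eq_zero j, Matrix.smul_apply, smul_eq_mul,
    ← one_mul ((g * vectorPfaffian l y) i 0), ← Matrix.single_mul_apply_same (1 : ℂ) (0 : Fin 1),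
    ← Matrix.mul_assoc, row_mul_vectorPfaffian, Matrix.inv_eq_left_inv hg]
  simp only [vectorPfaffian, Matrix.of_apply, Yblock_eq_borderedMatrix, pfaffian_eq_mul_pfaffianSum,
    pfaffianSum_borderedMatrix_mul_mul_transpose (mul_eq_one_comm.1 hg)]
  ring

variable (l) in
noncomputable def vectorPfaffianPoly (i : Fin (2 * l + 1)) :
    MvPolynomial (Fin (2 * l + 1) × Fin (2 * l + 1)) ℂ :=
  MvPolynomial.C (1 / (2 ^ (l + 1) * ((l + 1).factorial : ℂ))) *
    pfaffianSum (l + 1)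
      (borderedMatrix l (Matrix.of fun a b => MvPolynomial.X (a, b)) (Matrix.single 0 i 1))

lemma eval_vectorPfaffianPoly (y : Matrix (Fin (2 * l + 1)) (Fin (2 * l + 1)) ℂ)
    (i : Fin (2 * l + 1)) :
    MvPolynomial.eval (fun q => y q.1 q.2) (vectorPfaffianPoly l i) = vectorPfaffian l y i 0 := by
  rw [vectorPfaffianPoly, map_mul, MvPolynomial.eval_C, RingHom.map_pfaffianSum, borderedMatrix_map]
  congr 3
  · ext; simp
  · ext; simp [Matrix.single_apply]

end VectorPfaffian

/-- For odd `n = 2ℓ+1` there is a polynomial covariant `pf : so(n) → ℂⁿ`, the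
vector pfaffian, with `w* · pf(y) = Pf [[y, -ᵗw*], [w*, 0]]` and
`pf(g y g⁻¹) = (det g) g · pf(y)` for orthogonal `g`. -/
theorem stmt17 (l : ℕ) :
    ∃ pf : Matrix (Fin (2 * l + 1)) (Fin (2 * l + 1)) ℂ →
        Matrix (Fin (2 * l + 1)) (Fin 1) ℂ,
      (∃ P : Fin (2 * l + 1) →
          MvPolynomial (Fin (2 * l + 1) × Fin (2 * l + 1)) ℂ,
        ∀ y i, pf y i 0 = MvPolynomial.eval (fun q => y q.1 q.2) (P i)) ∧
      (∀ (y : Matrix (Fin (2 * l + 1)) (Fin (2 * l + 1)) ℂ)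
          (wstar : Matrix (Fin 1) (Fin (2 * l + 1)) ℂ), yᵀ = -y →
        (wstar * pf y) 0 0 = pfaffian (l + 1) (Yblock l y wstar)) ∧
      (∀ (y g : Matrix (Fin (2 * l + 1)) (Fin (2 * l + 1)) ℂ), yᵀ = -y →
        gᵀ * g = 1 → pf (g * y * g⁻¹) = g.det • (g * pf y)) :=
  ⟨vectorPfaffian l, ⟨vectorPfaffianPoly l, fun y i => (eval_vectorPfaffianPoly y i).symm⟩,
    fun y w _ => row_mul_vectorPfaffian y w, fun y _ _ hg => vectorPfaffian_conj hg y⟩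
end
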